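/- Let C = (ρ_i)_{i∈A} be a continuous family in T of stable degree m. Then Γ_{ρ_i}^0 = Γ_C for every i ∈ A with deg(ρ_i) = m. In particular, the stable group Γ_C is a subgroup of Λ. -/

import Mathlib

open Polynomial

namespace MLV

variable {K : Type*} [Field K] {Λ : Type*} [AddCommGroup Λ] [LinearOrder Λ] [IsOrderedAddMonoid Λ]

/-- A valuation on the field `K` with values in `Λ∞ = WithTop Λ`. -/
structure FieldVal (K : Type*) (Λ : Type*) [Field K] [AddCommGroup Λ] [LinearOrder Λ] [IsOrderedAddMonoid Λ] where
  v : K → WithTop Λ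
  map_one' : v 1 = 0
  map_zero' : v 0 = ⊤
  ne_top' : ∀ a : K, a ≠ 0 → v a ≠ ⊤
  map_mul' : ∀ a b : K, v (a * b) = v a + v b
  map_add' : ∀ a b : K, min (v a) (v b) ≤ v (a + b)

/-- `μ` is a node of the tree `T = T(Λ)`: a valuation on `K[x]` with values in `Λ∞`
whose restriction to `K` is `v`. -/
def IsValT (v : FieldVal K Λ) (μ : Polynomial K → WithTop Λ) : Prop :=
  μ 1 = 0 ∧ μ 0 = ⊤ ∧ (∀ f g : Polynomial K, μ (f * g) = μ f + μ g) ∧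
    (∀ f g : Polynomial K, min (μ f) (μ g) ≤ μ (f + g)) ∧
    ∀ a : K, μ (C a) = v.v a

/-- `g ∼_μ h` : `μ(g - h) > μ(g)`. -/
def MuEquiv (μ : Polynomial K → WithTop Λ) (g h : Polynomial K) : Prop :=
  μ g < μ (g - h)

/-- `h ∣_μ g` : `g ∼_μ f * h` for some `f`. -/
def MuDvd (μ : Polynomial K → WithTop Λ) (h g : Polynomial K) : Prop :=
  ∃ f : Polynomial K, MuEquiv μ g (f * h)

/-- `g ∈ K[x] \ K` is `μ`-minimal if it `μ`-divides no nonzero polynomial of smaller degree. -/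
def IsMuMinimal (μ : Polynomial K → WithTop Λ) (g : Polynomial K) : Prop :=
  0 < g.natDegree ∧
    ∀ f : Polynomial K, f ≠ 0 → f.degree < g.degree → ¬ MuDvd μ g f

/-- `g` is `μ`-irreducible. -/
def IsMuIrreducible (μ : Polynomial K → WithTop Λ) (g : Polynomial K) : Prop :=
  μ g ≠ ⊤ ∧ (¬ ∃ f : Polynomial K, MuEquiv μ (f * g) 1) ∧
    ∀ f h : Polynomial K, MuDvd μ g (f * h) → MuDvd μ g f ∨ MuDvd μ g h

/-- A (Maclane-Vaquié) key polynomial for `μ`. -/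
def IsKeyPol (μ : Polynomial K → WithTop Λ) (φ : Polynomial K) : Prop :=
  φ.Monic ∧ IsMuMinimal μ φ ∧ IsMuIrreducible μ φ

/-- An inner node: a valuation admitting key polynomials. -/
def IsInnerNode (μ : Polynomial K → WithTop Λ) : Prop :=
  ∃ φ : Polynomial K, IsKeyPol μ φ

/-- `deg(μ)`: the minimal degree of a key polynomial for `μ`. -/
noncomputable def degOf (μ : Polynomial K → WithTop Λ) : ℕ :=
  sInf {n : ℕ | ∃ φ : Polynomial K, IsKeyPol μ φ ∧ φ.natDegree = n}

/-- A key polynomial of minimal degree. -/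
def IsMinKeyPol (μ : Polynomial K → WithTop Λ) (φ : Polynomial K) : Prop :=
  IsKeyPol μ φ ∧ ∀ ψ : Polynomial K, IsKeyPol μ ψ → φ.natDegree ≤ ψ.natDegree

/-- the class `[φ]_μ` of key polynomials `μ`-equivalent to `φ`. -/
def KeyPolClass (μ : Polynomial K → WithTop Λ) (φ : Polynomial K) : Set (Polynomial K) :=
  {ψ : Polynomial K | IsKeyPol μ ψ ∧ MuEquiv μ ψ φ}

/-- The coefficient `a_s` of the `φ`-expansion `f = Σ_s a_s φ^s` (for `φ` monic nonconstant). -/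
noncomputable def expCoeff (φ f : Polynomial K) (s : ℕ) : Polynomial K :=
  (f /ₘ φ ^ s) %ₘ φ

/-- The augmented valuation `[μ; φ, γ]`, acting on `φ`-expansions by
`ν(Σ_s a_s φ^s) = min_s (μ(a_s) + s γ)`. -/
noncomputable def augVal (μ : Polynomial K → WithTop Λ) (φ : Polynomial K)
    (γ : WithTop Λ) (f : Polynomial K) : WithTop Λ :=
  (Finset.range (f.natDegree + 1)).inf'
    (Finset.nonempty_range_iff.mpr (Nat.succ_ne_zero _))
    fun s => μ (expCoeff φ f s) + s • γ

/-- The depth-zero valuation `ω_{a,δ}`, acting on `(x-a)`-expansions by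
`ω(Σ_s a_s (x-a)^s) = min_s (v(a_s) + s δ)`. -/
noncomputable def omegaVal (v : FieldVal K Λ) (a : K) (δ : WithTop Λ)
    (f : Polynomial K) : WithTop Λ :=
  (Finset.range (f.natDegree + 1)).inf'
    (Finset.nonempty_range_iff.mpr (Nat.succ_ne_zero _))
    fun s => v.v ((taylor a f).coeff s) + s • δ

/-- The tangent direction `t(μ,ν)`: monic polynomials of minimal degree with `μ(φ) < ν(φ)`. -/
def TangentDir (μ ν : Polynomial K → WithTop Λ) : Set (Polynomial K) :=
  {φ : Polynomial K | φ.Monic ∧ μ φ < ν φ ∧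
    ∀ ψ : Polynomial K, ψ.Monic → μ ψ < ν ψ → φ.natDegree ≤ ψ.natDegree}

/-- The set of finite values of `μ`. -/
def valSet (μ : Polynomial K → WithTop Λ) : Set Λ :=
  {γ : Λ | ∃ f : Polynomial K, μ f = (γ : WithTop Λ)}

/-- The value group `Γ_μ`. -/
def valGroup (μ : Polynomial K → WithTop Λ) : AddSubgroup Λ :=
  AddSubgroup.closure (valSet μ)

/-- `Γ = v(K^*)` as a subset of `Λ`. -/
def gammaSet (v : FieldVal K Λ) : Set Λ :=
  {γ : Λ | ∃ a : K, v.v a = (γ : WithTop Λ)}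

/-- The value group `Γ` of the base field valuation. -/
def baseGroup (v : FieldVal K Λ) : AddSubgroup Λ :=
  AddSubgroup.closure (gammaSet v)

/-- `μ` is commensurable over `v` : `Γ_μ/Γ` is torsion. -/
def IsCommensurable (v : FieldVal K Λ) (μ : Polynomial K → WithTop Λ) : Prop :=
  ∀ γ : Λ, γ ∈ valGroup μ → ∃ n : ℕ, 0 < n ∧ n • γ ∈ baseGroup v

/-- `Γ_μ^0 = {μ(a) : a ∈ K[x], 0 ≤ deg(a) < deg(μ)}`. -/
noncomputable def degZeroSet (μ : Polynomial K → WithTop Λ) : Set Λ :=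
  {δ : Λ | ∃ a : Polynomial K, a ≠ 0 ∧ a.natDegree < degOf μ ∧ μ a = (δ : WithTop Λ)}

/-- Equivalence of valuations: an order-preserving isomorphism `ι : Γ_μ → Γ_ν`
with `ν = ι ∘ μ`. -/
def ValEquiv (μ ν : Polynomial K → WithTop Λ) : Prop :=
  ∃ ι : valGroup μ ≃+ valGroup ν,
    Monotone ι ∧ (∀ f : Polynomial K, μ f = ⊤ ↔ ν f = ⊤) ∧
    ∀ (f : Polynomial K) (γ : Λ) (h : μ f = (γ : WithTop Λ)),
      ν f = ((ι ⟨γ, AddSubgroup.subset_closure ⟨f, h⟩⟩ : Λ) : WithTop Λ)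

/-- `β ∼_sme γ` : an order-preserving isomorphism `⟨Γ,β⟩ → ⟨Γ,γ⟩` fixing `Γ`
and mapping `β` to `γ`. -/
def SmeEquiv (v : FieldVal K Λ) (β γ : Λ) : Prop :=
  ∃ ι : (AddSubgroup.closure (gammaSet v ∪ {β}) : AddSubgroup Λ) ≃+
      (AddSubgroup.closure (gammaSet v ∪ {γ}) : AddSubgroup Λ),
    Monotone ι ∧
    (∀ (a : Λ) (ha : a ∈ gammaSet v),
      ((ι ⟨a, AddSubgroup.subset_closure (Set.mem_union_left _ ha)⟩ : Λ) = a)) ∧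
    ((ι ⟨β, AddSubgroup.subset_closure (Set.mem_union_right _ rfl)⟩ : Λ) = γ)

section Families

variable {ι : Type*} [LinearOrder ι]

/-- A totally ordered family of inner nodes of `T`, indexed order-isomorphically by a
totally ordered set, containing no maximal element. -/
def IsTOFamily (v : FieldVal K Λ) (ρ : ι → Polynomial K → WithTop Λ) : Prop :=
  (∀ i, IsValT v (ρ i)) ∧ (∀ i, IsInnerNode (ρ i)) ∧ StrictMono ρ ∧
    ∀ i : ι, ∃ j : ι, i < j

/-- `f` is `A`-stable: the values `ρ_i(f)` are eventually constant. -/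
def IsStablePoly (ρ : ι → Polynomial K → WithTop Λ) (f : Polynomial K) : Prop :=
  ∃ i : ι, ∀ j : ι, i ≤ j → ρ j f = ρ i f

/-- `β` is the stable value `ρ_A(f)`. -/
def IsStableVal (ρ : ι → Polynomial K → WithTop Λ) (f : Polynomial K)
    (β : WithTop Λ) : Prop :=
  ∃ i : ι, ∀ j : ι, i ≤ j → ρ j f = β

open Classical in
/-- The stability function `ρ_A` (junk value `⊤` on unstable polynomials). -/
noncomputable def stableVal (ρ : ι → Polynomial K → WithTop Λ) (f : Polynomial K) :
    WithTop Λ :=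
  if h : ∃ β : WithTop Λ, IsStableVal ρ f β then h.choose else ⊤

/-- The family has stable degree `m`. -/
def HasStableDeg (ρ : ι → Polynomial K → WithTop Λ) (m : ℕ) : Prop :=
  ∃ i : ι, ∀ j : ι, i ≤ j → degOf (ρ j) = m

/-- A continuous family: a totally ordered family of eventually constant degree. -/
def IsContFamily (v : FieldVal K Λ) (ρ : ι → Polynomial K → WithTop Λ) : Prop :=
  IsTOFamily v ρ ∧ ∃ m : ℕ, HasStableDeg ρ m

/-- The stable group `Γ_C`: stable values of nonzero stable polynomials. -/
def stableSet (ρ : ι → Polynomial K → WithTop Λ) : Set Λ :=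
  {δ : Λ | ∃ f : Polynomial K, f ≠ 0 ∧ IsStableVal ρ f (δ : WithTop Λ)}

/-- A limit key polynomial: monic, unstable, of minimal degree among unstable polynomials. -/
def IsLimKeyPol (ρ : ι → Polynomial K → WithTop Λ) (φ : Polynomial K) : Prop :=
  φ.Monic ∧ ¬ IsStablePoly ρ φ ∧
    ∀ f : Polynomial K, ¬ IsStablePoly ρ f → φ.natDegree ≤ f.natDegree

/-- An essential continuous family: `m(C) < m_∞(C) < ∞`. -/
def IsEssential (v : FieldVal K Λ) (ρ : ι → Polynomial K → WithTop Λ) : Prop :=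
  IsTOFamily v ρ ∧
    ∃ m : ℕ, HasStableDeg ρ m ∧
      ∃ φ : Polynomial K, IsLimKeyPol ρ φ ∧ m < φ.natDegree

/-- The limit augmentation `[C; φ, γ]`, acting on `φ`-expansions by
`ν(Σ_s a_s φ^s) = min_s (ρ_C(a_s) + s γ)`. -/
noncomputable def limAugVal (ρ : ι → Polynomial K → WithTop Λ) (φ : Polynomial K)
    (γ : WithTop Λ) (f : Polynomial K) : WithTop Λ :=
  (Finset.range (f.natDegree + 1)).inf'
    (Finset.nonempty_range_iff.mpr (Nat.succ_ne_zero _))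
    fun s => stableVal ρ (expCoeff φ f s) + s • γ

/-- Equivalence of totally ordered families: mutual cofinality. -/
def FamEquiv {κ : Type*} [LinearOrder κ] (ρ : ι → Polynomial K → WithTop Λ)
    (σ : κ → Polynomial K → WithTop Λ) : Prop :=
  (∀ i : ι, ∃ j : κ, ρ i ≤ σ j) ∧ ∀ j : κ, ∃ i : ι, σ j ≤ ρ i

end Families

end MLV

open MLV

/-
If `μ ≤ ν`, then `μ` and `ν` agree on polynomials of degree `< deg μ`: a monic polynomial `χ` of
least degree with `μ χ < ν χ` (the tangent direction) is a key polynomial for `μ`, and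
`χ ∣_μ f ↔ μ f < ν f`. So polynomials of degree `< deg ρ_i` are stable from `i` on. Conversely,
the stable value of `f` is attained at some large `j`; for `j' > j` the tangent direction `χ` of
`ρ_j < ρ_j'` does not `ρ_j`-divide `f`, and `deg χ ≤ deg ρ_j' = m`. Hence `f %ₘ χ` has the same
`ρ_j`-value as `f` and degree `< m`, so it realizes that value in `Γ_{ρ_i}^0`.
Finally `Γ_μ^0` is a group: products of polynomials of degree `< deg φ` reduce modulo a key
polynomial `φ` without changing their value, and `φ` is irreducible, so such a polynomial has an
inverse modulo `φ`.
-/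

section

variable {K : Type*} [Field K] {Λ : Type*} [AddCommGroup Λ] [LinearOrder Λ] [IsOrderedAddMonoid Λ]
  {v : FieldVal K Λ} {μ ν : K[X] → WithTop Λ}

namespace MLV.IsValT

noncomputable def toAddValuation (hμ : IsValT v μ) : AddValuation K[X] (WithTop Λ) :=
  AddValuation.of μ hμ.2.1 hμ.1 hμ.2.2.2.1 hμ.2.2.1

theorem map_one (hμ : IsValT v μ) : μ 1 = 0 := hμ.1

theorem map_zero (hμ : IsValT v μ) : μ 0 = ⊤ := hμ.2.1

theorem map_mul (hμ : IsValT v μ) (f g : K[X]) : μ (f * g) = μ f + μ g := hμ.2.2.1 f g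

theorem map_add (hμ : IsValT v μ) (f g : K[X]) : min (μ f) (μ g) ≤ μ (f + g) := hμ.2.2.2.1 f g

theorem map_sub (hμ : IsValT v μ) (f g : K[X]) : min (μ f) (μ g) ≤ μ (f - g) :=
  hμ.toAddValuation.map_sub f g

theorem map_sub_swap (hμ : IsValT v μ) (f g : K[X]) : μ (f - g) = μ (g - f) :=
  hμ.toAddValuation.map_sub_swap f g

theorem map_add_eq_of_lt_left (hμ : IsValT v μ) {f g : K[X]} (h : μ f < μ g) :
    μ (f + g) = μ f :=
  hμ.toAddValuation.map_add_eq_of_lt_left h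

theorem map_sub_eq_of_lt_right (hμ : IsValT v μ) {f g : K[X]} (h : μ g < μ f) :
    μ (f - g) = μ g :=
  hμ.toAddValuation.map_sub_eq_of_lt_right h

theorem map_mul_C (hμ : IsValT v μ) (f : K[X]) (a : K) : μ (f * C a) = μ f + v.v a := by
  rw [hμ.map_mul, hμ.2.2.2.2]

theorem map_eq_of_muEquiv (hμ : IsValT v μ) {f g : K[X]} (h : MuEquiv μ f g) : μ g = μ f :=
  hμ.toAddValuation.map_eq_of_lt_sub (show μ f < μ (g - f) by rwa [hμ.map_sub_swap])

theorem muEquiv_symm (hμ : IsValT v μ) {f g : K[X]} (h : MuEquiv μ f g) : MuEquiv μ g f := by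
  unfold MuEquiv at h ⊢
  rwa [hμ.map_eq_of_muEquiv h, hμ.map_sub_swap]

variable {φ : K[X]}

theorem map_le_map_modByMonic (hμ : IsValT v μ) (hφ : φ.Monic) (hmin : IsMuMinimal μ φ)
    (f : K[X]) : μ f ≤ μ (f %ₘ φ) := by
  by_contra! hlt
  have hr0 : f %ₘ φ ≠ 0 := by
    rintro h
    rw [h, hμ.map_zero] at hlt
    exact not_top_lt hlt
  refine hmin.2 _ hr0 (degree_modByMonic_lt f hφ) ⟨-(f /ₘ φ), ?_⟩
  unfold MuEquiv
  rwa [neg_mul, sub_neg_eq_add, mul_comm, modByMonic_add_div]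

theorem map_modByMonic_eq (hμ : IsValT v μ) (hφ : φ.Monic) (hmin : IsMuMinimal μ φ)
    {f : K[X]} (hnd : ¬ MuDvd μ φ f) : μ (f %ₘ φ) = μ f := by
  refine ((hμ.map_le_map_modByMonic hφ hmin f).eq_or_lt.resolve_right fun hlt => hnd ?_).symm
  refine ⟨f /ₘ φ, ?_⟩
  unfold MuEquiv
  rwa [modByMonic_eq_sub_mul_div, mul_comm] at hlt

/-- By `ν`-minimality both summands of `f = f %ₘ ψ + ψ * (f /ₘ ψ)` have `ν`-value `≥ ν f`, so
induction on the degree applies. -/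
theorem le_of_forall_natDegree_le (hμ : IsValT v μ) (hν : IsValT v ν) {ψ : K[X]}
    (hψ : ψ.Monic) (hmin : IsMuMinimal ν ψ)
    (h : ∀ g : K[X], g.natDegree ≤ ψ.natDegree → ν g ≤ μ g) : ν ≤ μ := by
  intro f
  induction hn : f.natDegree using Nat.strong_induction_on generalizing f with
  | _ n ih =>
  rcases le_or_gt n ψ.natDegree with hle | hlt
  · exact h f (hn ▸ hle)
  have hq : (f /ₘ ψ).natDegree < n := by
    rw [natDegree_divByMonic f hψ]
    have := hmin.1
    omega
  have hr := hν.map_le_map_modByMonic hψ hmin f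
  have hqψ : ν f ≤ ν (ψ * (f /ₘ ψ)) := by
    have := hν.map_sub f (f %ₘ ψ)
    rwa [min_eq_left hr, modByMonic_eq_sub_mul_div, sub_sub_cancel] at this
  calc ν f ≤ min (ν (f %ₘ ψ)) (ν (ψ * (f /ₘ ψ))) := le_min hr hqψ
    _ ≤ min (μ (f %ₘ ψ)) (μ (ψ * (f /ₘ ψ))) := by
      refine min_le_min (h _ (natDegree_modByMonic_le f hψ)) ?_
      rw [hν.map_mul, hμ.map_mul]
      exact add_le_add (h ψ le_rfl) (ih _ hq _ rfl)
    _ ≤ μ f := by simpa only [modByMonic_add_div] using hμ.map_add (f %ₘ ψ) (ψ * (f /ₘ ψ))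

theorem exists_monic_lt (hμ : IsValT v μ) (hν : IsValT v ν) {f : K[X]} (hf : μ f < ν f) :
    ∃ g : K[X], g.Monic ∧ g.natDegree = f.natDegree ∧ μ g < ν g := by
  have hf0 : f ≠ 0 := by
    rintro rfl
    rw [hμ.map_zero, hν.map_zero] at hf
    exact lt_irrefl _ hf
  refine ⟨f * C (leadingCoeff f)⁻¹, monic_mul_leadingCoeff_inv hf0,
    natDegree_mul_leadingCoeff_inv f hf0, ?_⟩
  rw [hμ.map_mul_C, hν.map_mul_C]
  exact WithTop.add_lt_add_right (v.ne_top' _ (inv_ne_zero (leadingCoeff_ne_zero.mpr hf0))) hf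

theorem map_mul_lt_of_lt (hμ : IsValT v μ) (hν : IsValT v ν) (hle : μ ≤ ν) {f g : K[X]}
    (hf : μ f ≠ ⊤) (hg : μ g < ν g) : μ (f * g) < ν (f * g) := by
  rw [hμ.map_mul, hν.map_mul]
  calc μ f + μ g < μ f + ν g := WithTop.add_lt_add_left hf hg
    _ ≤ ν f + ν g := add_le_add (hle f) le_rfl

theorem lt_or_lt_of_map_mul_lt (hμ : IsValT v μ) (hν : IsValT v ν) (hle : μ ≤ ν) {f g : K[X]}
    (h : μ (f * g) < ν (f * g)) : μ f < ν f ∨ μ g < ν g := by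
  by_contra! hfg
  rw [hμ.map_mul, hν.map_mul, le_antisymm (hle f) hfg.1, le_antisymm (hle g) hfg.2] at h
  exact lt_irrefl _ h

end MLV.IsValT

namespace MLV.TangentDir

variable (hμ : IsValT v μ) (hν : IsValT v ν)
include hμ hν

theorem nonempty (hlt : μ < ν) : (TangentDir μ ν).Nonempty := by
  classical
  obtain ⟨-, f, hf⟩ := Pi.lt_def.mp hlt
  have hex : ∃ n, ∃ g : K[X], g.Monic ∧ μ g < ν g ∧ g.natDegree = n := by
    obtain ⟨g, hg, -, hglt⟩ := hμ.exists_monic_lt hν hf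
    exact ⟨_, g, hg, hglt, rfl⟩
  obtain ⟨χ, hχ, hχlt, hχdeg⟩ := Nat.find_spec hex
  exact ⟨χ, hχ, hχlt, fun ψ hψ hψlt => hχdeg ▸ Nat.find_min' hex ⟨ψ, hψ, hψlt, rfl⟩⟩

variable {χ : K[X]} (hle : μ ≤ ν) (hχ : χ ∈ TangentDir μ ν)
include hle hχ

theorem eq_of_degree_lt {g : K[X]} (hg : g.degree < χ.degree) : μ g = ν g := by
  by_contra hne
  have hg0 : g ≠ 0 := by
    rintro rfl
    exact hne (hμ.map_zero.trans hν.map_zero.symm)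
  obtain ⟨h, hh, hhdeg, hhlt⟩ := hμ.exists_monic_lt hν (lt_of_le_of_ne (hle g) hne)
  have := hχ.2.2 h hh hhlt
  have := natDegree_lt_natDegree hg0 hg
  omega

theorem muDvd_iff {f : K[X]} : MuDvd μ χ f ↔ μ f < ν f := by
  constructor
  · rintro ⟨q, hq⟩
    have hqχ : μ (q * χ) = μ f := hμ.map_eq_of_muEquiv hq
    have hq_top : μ q ≠ ⊤ := by
      intro h
      rw [hμ.map_mul, h, top_add] at hqχ
      exact (ne_top_of_lt hq) hqχ.symm
    calc μ f < min (ν (q * χ)) (ν (f - q * χ)) :=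
          lt_min (hqχ ▸ hμ.map_mul_lt_of_lt hν hle hq_top hχ.2.1) (hq.trans_le (hle _))
      _ ≤ ν f := by simpa only [add_sub_cancel] using hν.map_add (q * χ) (f - q * χ)
  · intro hf
    have hr_eq : f - f /ₘ χ * χ = f %ₘ χ := by rw [mul_comm, modByMonic_eq_sub_mul_div]
    refine ⟨f /ₘ χ, ?_⟩
    unfold MuEquiv
    rw [hr_eq]
    by_contra! hr
    have hrν : μ (f %ₘ χ) = ν (f %ₘ χ) :=
      eq_of_degree_lt hμ hν hle hχ (degree_modByMonic_lt f hχ.1)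
    have hνr : ν (f %ₘ χ) < ν f := hrν ▸ hr.trans_lt hf
    have hνqχ : ν (f /ₘ χ * χ) = ν (f %ₘ χ) := by
      rw [← hν.map_sub_eq_of_lt_right hνr, ← hr_eq, sub_sub_cancel]
    have hq_top : μ (f /ₘ χ) ≠ ⊤ := by
      have hνq : ν (f /ₘ χ * χ) ≠ ⊤ := by
        rw [hνqχ, ← hrν]
        exact ne_top_of_le_ne_top (ne_top_of_lt hf) hr
      rw [hν.map_mul] at hνq
      exact ne_top_of_le_ne_top (WithTop.add_ne_top.mp hνq).1 (hle _)
    have hlt : μ (f /ₘ χ * χ) < μ (f %ₘ χ) :=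
      hrν ▸ hνqχ ▸ hμ.map_mul_lt_of_lt hν hle hq_top hχ.2.1
    have hf_eq : μ f = μ (f /ₘ χ * χ) := by
      rw [← hμ.map_add_eq_of_lt_left hlt, mul_comm, add_comm, modByMonic_add_div]
    exact (hlt.trans_le hr).ne hf_eq.symm

theorem isKeyPol : IsKeyPol μ χ := by
  have hpos : 0 < χ.natDegree := by
    by_contra! h
    have h1 : χ = 1 := (Monic.natDegree_eq_zero hχ.1).mp (Nat.le_zero.mp h)
    have := hχ.2.1
    rw [h1, hμ.map_one, hν.map_one] at this
    exact lt_irrefl _ this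
  refine ⟨hχ.1, ⟨hpos, fun f _ hf hdvd => ?_⟩, ne_top_of_lt hχ.2.1, ?_, fun f g hdvd => ?_⟩
  · exact ((muDvd_iff hμ hν hle hχ).mp hdvd).ne (eq_of_degree_lt hμ hν hle hχ hf)
  · rintro ⟨f, hf⟩
    have := (muDvd_iff hμ hν hle hχ).mp ⟨f, hμ.muEquiv_symm hf⟩
    rw [hμ.map_one, hν.map_one] at this
    exact lt_irrefl _ this
  · simp only [muDvd_iff hμ hν hle hχ] at hdvd ⊢
    exact hμ.lt_or_lt_of_map_mul_lt hν hle hdvd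

end MLV.TangentDir

namespace MLV

omit [AddCommGroup Λ] [IsOrderedAddMonoid Λ] in
theorem degOf_le_natDegree {φ : K[X]} (hφ : IsKeyPol μ φ) : degOf μ ≤ φ.natDegree :=
  Nat.sInf_le ⟨φ, hφ, rfl⟩

omit [AddCommGroup Λ] [IsOrderedAddMonoid Λ] in
theorem IsInnerNode.exists_isKeyPol_natDegree_eq (hμ : IsInnerNode μ) :
    ∃ φ : K[X], IsKeyPol μ φ ∧ φ.natDegree = degOf μ := by
  obtain ⟨φ, hφ⟩ := hμ
  exact Nat.sInf_mem (s := {n | ∃ φ : K[X], IsKeyPol μ φ ∧ φ.natDegree = n}) ⟨_, φ, hφ, rfl⟩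

theorem TangentDir.natDegree_le_degOf (hμ : IsValT v μ) (hν : IsValT v ν) (hle : μ ≤ ν)
    (hinn : IsInnerNode ν) {χ : K[X]} (hχ : χ ∈ TangentDir μ ν) : χ.natDegree ≤ degOf ν := by
  obtain ⟨ψ, hψ, hψdeg⟩ := hinn.exists_isKeyPol_natDegree_eq
  by_contra! h
  have hνμ : ν ≤ μ := hμ.le_of_forall_natDegree_le hν hψ.1 hψ.2.1 fun g hg =>
    (TangentDir.eq_of_degree_lt hμ hν hle hχ (degree_lt_degree (by omega))).ge
  exact (hχ.2.1.trans_le (hνμ χ)).false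

theorem IsValT.eq_of_natDegree_lt_degOf (hμ : IsValT v μ) (hν : IsValT v ν) (hle : μ ≤ ν)
    {f : K[X]} (hf : f.natDegree < degOf μ) : μ f = ν f := by
  by_contra hne
  have hf_lt : μ f < ν f := lt_of_le_of_ne (hle f) hne
  obtain ⟨χ, hχ⟩ := TangentDir.nonempty hμ hν (Pi.lt_def.mpr ⟨hle, f, hf_lt⟩)
  have hχdeg := degOf_le_natDegree (TangentDir.isKeyPol hμ hν hle hχ)
  obtain ⟨g, hg, hgdeg, hglt⟩ := hμ.exists_monic_lt hν hf_lt
  have := hχ.2.2 g hg hglt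
  omega

namespace IsKeyPol

variable {φ : K[X]} (hφ : IsKeyPol μ φ)
include hφ

omit [AddCommGroup Λ] [IsOrderedAddMonoid Λ] in
theorem not_muDvd_mul {a b : K[X]} (ha : a ≠ 0) (hb : b ≠ 0) (ha' : a.degree < φ.degree)
    (hb' : b.degree < φ.degree) : ¬ MuDvd μ φ (a * b) := fun h =>
  (hφ.2.2.2.2 a b h).elim (hφ.2.1.2 a ha ha') (hφ.2.1.2 b hb hb')

theorem irreducible (hμ : IsValT v μ) : Irreducible φ := by
  have hpos := hφ.2.1.1
  refine hφ.1.irreducible_iff_natDegree.mpr ⟨fun h => by simp [h] at hpos, fun f g hf hg hfg => ?_⟩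
  by_contra! h
  have hdeg := hf.natDegree_mul hg
  rw [hfg] at hdeg
  refine hφ.not_muDvd_mul hf.ne_zero hg.ne_zero (degree_lt_degree (by omega))
    (degree_lt_degree (by omega)) ⟨1, ?_⟩
  unfold MuEquiv
  rw [hfg, one_mul, sub_self, hμ.map_zero]
  exact lt_top_iff_ne_top.mpr hφ.2.2.1

variable (hμ : IsValT v μ) (hdeg : φ.natDegree = degOf μ)
include hμ hdeg

theorem zero_mem_degZeroSet : (0 : Λ) ∈ degZeroSet μ :=
  ⟨1, one_ne_zero, by rw [natDegree_one, ← hdeg]; exact hφ.2.1.1,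
    by rw [hμ.map_one, WithTop.coe_zero]⟩

theorem add_mem_degZeroSet {δ₁ δ₂ : Λ} (h₁ : δ₁ ∈ degZeroSet μ) (h₂ : δ₂ ∈ degZeroSet μ) :
    δ₁ + δ₂ ∈ degZeroSet μ := by
  obtain ⟨a, ha0, ha, haδ⟩ := h₁
  obtain ⟨b, hb0, hb, hbδ⟩ := h₂
  rw [← hdeg] at ha hb
  have hval : μ ((a * b) %ₘ φ) = ↑(δ₁ + δ₂) := by
    rw [hμ.map_modByMonic_eq hφ.1 hφ.2.1 (hφ.not_muDvd_mul ha0 hb0 (degree_lt_degree ha)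
      (degree_lt_degree hb)), hμ.map_mul, haδ, hbδ, WithTop.coe_add]
  have hr0 : (a * b) %ₘ φ ≠ 0 := fun h => by
    rw [h, hμ.map_zero] at hval
    exact WithTop.top_ne_coe hval
  exact ⟨_, hr0, hdeg ▸ natDegree_lt_natDegree hr0 (degree_modByMonic_lt _ hφ.1), hval⟩

/-- A nonzero `a` of degree `< deg φ` is invertible modulo the irreducible `φ`, and the inverse
`u` has value `-μ(a)` because `u * a` is not `μ`-divisible by `φ` and reduces to `1`. -/
theorem neg_mem_degZeroSet {δ : Λ} (h : δ ∈ degZeroSet μ) : -δ ∈ degZeroSet μ := by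
  obtain ⟨a, ha0, ha, haδ⟩ := h
  rw [← hdeg] at ha
  obtain ⟨y, x, hxy⟩ : IsCoprime φ a := (hφ.irreducible hμ).coprime_iff_not_dvd.mpr
    fun h => (natDegree_le_of_dvd h ha0).not_gt ha
  set u := x %ₘ φ
  have hua : (u * a) %ₘ φ = 1 := by
    have hdvd : φ ∣ u * a - 1 := by
      have : u * a - 1 = (u - x) * a - y * φ := by linear_combination hxy
      rw [this]
      exact dvd_sub ((dvd_modByMonic_sub x φ).mul_right a) (dvd_mul_left φ y)
    rw [modByMonic_eq_of_dvd_sub hφ.1 hdvd, (modByMonic_eq_self_iff hφ.1).mpr]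
    exact degree_lt_degree (natDegree_one.trans_lt hφ.2.1.1)
  have hu0 : u ≠ 0 := fun h => by simp [h] at hua
  have hval : μ u + ↑δ = 0 := by
    rw [← haδ, ← hμ.map_mul, ← hμ.map_modByMonic_eq hφ.1 hφ.2.1 (hφ.not_muDvd_mul hu0 ha0
      (degree_modByMonic_lt x hφ.1) (degree_lt_degree ha)), hua, hμ.map_one]
  obtain ⟨c, hc⟩ := WithTop.ne_top_iff_exists.mp
    (WithTop.add_ne_top.mp (hval ▸ WithTop.zero_ne_top)).1
  rw [← hc, ← WithTop.coe_add, WithTop.coe_eq_zero] at hval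
  exact ⟨u, hu0, hdeg ▸ natDegree_lt_natDegree hu0 (degree_modByMonic_lt x hφ.1),
    by rw [← hc, eq_neg_of_add_eq_zero_left hval]⟩

end IsKeyPol

theorem IsValT.exists_addSubgroup_coe_eq_degZeroSet (hμ : IsValT v μ) (hinn : IsInnerNode μ) :
    ∃ G : AddSubgroup Λ, (G : Set Λ) = degZeroSet μ := by
  obtain ⟨φ, hφ, hdeg⟩ := hinn.exists_isKeyPol_natDegree_eq
  exact ⟨{ carrier := degZeroSet μ
           add_mem' := hφ.add_mem_degZeroSet hμ hdeg
           zero_mem' := hφ.zero_mem_degZeroSet hμ hdeg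
           neg_mem' := hφ.neg_mem_degZeroSet hμ hdeg }, rfl⟩

variable {ι : Type*} [LinearOrder ι] {ρ : ι → K[X] → WithTop Λ}

theorem IsTOFamily.degZeroSet_subset_stableSet (hρ : IsTOFamily v ρ) (i : ι) :
    degZeroSet (ρ i) ⊆ stableSet ρ := by
  rintro δ ⟨a, ha0, ha, haδ⟩
  refine ⟨a, ha0, i, fun j hij => ?_⟩
  rw [← haδ, (hρ.1 i).eq_of_natDegree_lt_degOf (hρ.1 j) (hρ.2.2.1.monotone hij) ha]

theorem IsTOFamily.stableSet_subset_degZeroSet (hρ : IsTOFamily v ρ) {m : ℕ}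
    (hm : HasStableDeg ρ m) {i : ι} (hi : degOf (ρ i) = m) :
    stableSet ρ ⊆ degZeroSet (ρ i) := by
  obtain ⟨hval, hinner, hmono, hnomax⟩ := hρ
  rintro δ ⟨f, -, i₁, hf⟩
  obtain ⟨i₀, hdeg⟩ := hm
  set j := max i (max i₀ i₁)
  obtain ⟨j', hjj'⟩ := hnomax j
  have hij : i ≤ j := le_max_left _ _
  have hi₀j' : i₀ ≤ j' := ((le_max_left _ _).trans (le_max_right _ _)).trans hjj'.le
  have hi₁j : i₁ ≤ j := (le_max_right _ _).trans (le_max_right _ _)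
  have hle : ρ j ≤ ρ j' := hmono.monotone hjj'.le
  obtain ⟨χ, hχ⟩ := TangentDir.nonempty (hval j) (hval j') (hmono hjj')
  have hχdeg : χ.natDegree ≤ m :=
    hdeg j' hi₀j' ▸ TangentDir.natDegree_le_degOf (hval j) (hval j') hle (hinner j') hχ
  have hnd : ¬ MuDvd (ρ j) χ f := by
    rw [TangentDir.muDvd_iff (hval j) (hval j') hle hχ, hf j hi₁j, hf j' (hi₁j.trans hjj'.le)]
    exact lt_irrefl _
  have hr : ρ j (f %ₘ χ) = δ :=
    ((hval j).map_modByMonic_eq hχ.1 (TangentDir.isKeyPol (hval j) (hval j') hle hχ).2.1 hnd).trans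
      (hf j hi₁j)
  have hr0 : f %ₘ χ ≠ 0 := fun h => by
    rw [h, (hval j).map_zero] at hr
    exact WithTop.top_ne_coe hr
  have hrdeg : (f %ₘ χ).natDegree < degOf (ρ i) :=
    hi ▸ (natDegree_lt_natDegree hr0 (degree_modByMonic_lt f hχ.1)).trans_le hχdeg
  exact ⟨f %ₘ χ, hr0, hrdeg,
    by rw [(hval i).eq_of_natDegree_lt_degOf (hval j) (hmono.monotone hij) hrdeg, hr]⟩

end MLV

end

theorem statement_9_general {K : Type*} [Field K] {Λ : Type*} [AddCommGroup Λ] [LinearOrder Λ] [IsOrderedAddMonoid Λ] {ι : Type*} [LinearOrder ι]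
    (v : FieldVal K Λ) (ρ : ι → Polynomial K → WithTop Λ)
    (hTO : IsTOFamily v ρ) (m : ℕ) (hm : HasStableDeg ρ m) :
    (∀ i : ι, degOf (ρ i) = m → degZeroSet (ρ i) = stableSet ρ) ∧
    ∃ G : AddSubgroup Λ, (G : Set Λ) = stableSet ρ := by
  have hstable : ∀ i : ι, degOf (ρ i) = m → degZeroSet (ρ i) = stableSet ρ := fun i hi =>
    (hTO.degZeroSet_subset_stableSet i).antisymm (hTO.stableSet_subset_degZeroSet hm hi)
  obtain ⟨i₀, hi₀⟩ := hm
  obtain ⟨G, hG⟩ := (hTO.1 i₀).exists_addSubgroup_coe_eq_degZeroSet (hTO.2.1 i₀)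
  exact ⟨hstable, G, hG.trans (hstable i₀ (hi₀ i₀ le_rfl))⟩

/-- For a continuous family `C` of stable degree `m`, `Γ_{ρ_i}^0 = Γ_C` for every `i`
with `deg(ρ_i) = m`; in particular the stable group `Γ_C` is a subgroup of `Λ`. -/
theorem statement_9 {K : Type*} [Field K] {Λ : Type*} [AddCommGroup Λ] [LinearOrder Λ] [IsOrderedAddMonoid Λ] {ι : Type*} [LinearOrder ι] [Nonempty ι]
    (v : FieldVal K Λ) (ρ : ι → Polynomial K → WithTop Λ)
    (hTO : IsTOFamily v ρ) (m : ℕ) (hm : HasStableDeg ρ m) :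
    (∀ i : ι, degOf (ρ i) = m → degZeroSet (ρ i) = stableSet ρ) ∧
    ∃ G : AddSubgroup Λ, (G : Set Λ) = stableSet ρ :=
  statement_9_general v ρ hTO m hm
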